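/- arXiv:1704.06401 — 3 statements merged into one kernel-verified Lean document; each statement's English description precedes it below -/
import Mathlib

section
/- Let w : ℝ → ℂ be a differentiable function satisfying w'(s) = (w(s))² + 1 for all s ∈ ℝ. Then w(s) is not real (i.e., Im w(s) ≠ 0) for every s ∈ ℝ. -/
/-!
Write `w = v + i u`. Then `u' = 2 v u`, a linear equation in `u`, so `u · exp (-2 ∫ v)` is constant
and `u` vanishes everywhere once it vanishes at one point. In that case `v` is a real solution of
`v' = v² + 1` on all of `ℝ`; but then `arctan v - s` is constant, which is impossible since
`arctan v` stays in `(-π/2, π/2)` while `s` ranges over an interval of length `π`.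
-/

open Real

theorem HasDerivAt.complex_re {w : ℝ → ℂ} {w' : ℂ} {s : ℝ} (h : HasDerivAt w w' s) :
    HasDerivAt (fun t => (w t).re) w'.re s :=
  Complex.reCLM.hasFDerivAt.comp_hasDerivAt s h

theorem HasDerivAt.complex_im {w : ℝ → ℂ} {w' : ℂ} {s : ℝ} (h : HasDerivAt w w' s) :
    HasDerivAt (fun t => (w t).im) w'.im s :=
  Complex.imCLM.hasFDerivAt.comp_hasDerivAt s h

theorem eq_zero_of_hasDerivAt_mul_self {a u : ℝ → ℝ} (ha : Continuous a)
    (hu : ∀ s, HasDerivAt u (a s * u s) s) {s₀ : ℝ} (h₀ : u s₀ = 0) (s : ℝ) : u s = 0 := by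
  set A : ℝ → ℝ := fun t => ∫ r in s₀..t, a r
  have hA : ∀ t, HasDerivAt A (a t) t := fun t =>
    (ha.integral_hasStrictDerivAt s₀ t).hasDerivAt
  have hconst : ∀ t, HasDerivAt (fun t => u t * exp (-A t)) 0 t := fun t =>
    ((hu t).mul (hA t).neg.exp).congr_deriv (by simp only [Pi.neg_apply]; ring)
  have key := is_const_of_deriv_eq_zero (fun t => (hconst t).differentiableAt)
    (fun t => (hconst t).deriv) s s₀
  simpa [h₀, exp_ne_zero] using key

theorem not_forall_hasDerivAt_sq_add_one (v : ℝ → ℝ) :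
    ¬ ∀ s, HasDerivAt v (v s ^ 2 + 1) s := by
  intro hv
  have hconst : ∀ s, HasDerivAt (fun t => arctan (v t) - t) 0 s := by
    intro s
    refine ((hv s).arctan.sub (hasDerivAt_id s)).congr_deriv ?_
    field_simp
    ring
  have key := is_const_of_deriv_eq_zero (fun s => (hconst s).differentiableAt)
    (fun s => (hconst s).deriv) π 0
  simp only [sub_zero] at key
  linarith [arctan_lt_pi_div_two (v π), neg_pi_div_two_lt_arctan (v 0)]

/-- If `w : ℝ → ℂ` is differentiable and satisfies the Riccati equation
`w' = w² + 1` on all of `ℝ`, then `w s` is never real. -/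
theorem stmt_2 (w : ℝ → ℂ) (hw : Differentiable ℝ w)
    (hw' : ∀ s : ℝ, deriv w s = (w s) ^ 2 + 1) :
    ∀ s : ℝ, (w s).im ≠ 0 := by
  intro s₀ h₀
  have hderiv : ∀ s, HasDerivAt w (w s ^ 2 + 1) s := fun s => hw' s ▸ (hw s).hasDerivAt
  have him : ∀ s, (w s).im = 0 := by
    refine eq_zero_of_hasDerivAt_mul_self (a := fun t => 2 * (w t).re)
      (continuous_const.mul (Complex.continuous_re.comp hw.continuous)) (fun s => ?_) h₀
    convert (hderiv s).complex_im using 1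
    simp only [pow_two, Complex.add_im, Complex.mul_im, Complex.one_im]
    ring
  refine not_forall_hasDerivAt_sq_add_one (fun t => (w t).re) (fun s => ?_)
  convert (hderiv s).complex_re using 1
  simp [pow_two, him s]
end

section
/- Let n ≥ 1 and let φ : EuclideanSpace ℝ (Fin n) → ℝ be a twice continuously differentiable function satisfying Δφ(x) ≥ 2(φ(x))² for every x. Then φ(x) ≤ 0 for every x and sup φ = 0 (i.e., the supremum of the range of φ equals 0). In particular, if φ(x) ≥ 0 for every x, then φ is identically zero. -/
/-- The Laplacian of a function on Euclidean space: the trace of its second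
derivative, i.e. the sum of the second derivatives along the standard
orthonormal basis directions. -/
noncomputable def laplacian {n : ℕ} (f : EuclideanSpace ℝ (Fin n) → ℝ)
    (x : EuclideanSpace ℝ (Fin n)) : ℝ :=
  ∑ i, iteratedFDeriv ℝ 2 f x ![EuclideanSpace.single i 1, EuclideanSpace.single i 1]

/-!
If `φ - g (‖·‖²)` has a local maximum at `p`, restricting to the coordinate lines through `p`
and applying the one-variable second derivative test gives
`Δφ p ≤ 4 ‖p‖² g'' (‖p‖²) + 2 n g' (‖p‖²)`, the Laplacian of the radial function.

For `φ ≤ 0`, compare with Osserman's barrier `W = (2n + 12) r / (r - ‖x‖²)²`, which blows up on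
the sphere `‖x‖² = r` and satisfies `ΔW ≤ 2 W²`: at a maximum of `φ - W` where `φ > W > 0` we
would get `2 φ² ≤ Δφ ≤ ΔW ≤ 2 W² < 2 φ²`. Hence `φ ≤ W` on the ball, and `W x = O(1 / r)` as
`r → ∞`.

For `sup φ = 0`: maximising `φ - c ‖x‖²` with `c` small produces points where `Δφ` is as small as
we like (the weak Omori–Yau principle), whereas `sup φ = S < 0` would force `Δφ ≥ 2 φ² ≥ 2 S² > 0`.
-/

open Filter Topology Metric Set
open scoped RealInnerProductSpace

-- If `f'' a > 0`, the second derivative test makes `a` a local minimum as well, so `f` is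
-- locally constant and `f'' a = 0`.
theorem IsLocalMax.deriv_deriv_nonpos {f : ℝ → ℝ} {a : ℝ} (h : IsLocalMax f a)
    (hc : ContinuousAt f a) : deriv (deriv f) a ≤ 0 := by
  by_contra! hpos
  have hmin : IsLocalMin f a := isLocalMin_of_deriv_deriv_pos hpos h.deriv_eq_zero hc
  have hconst : f =ᶠ[𝓝 a] fun _ => f a := (hmin.and h).mono fun t ht => le_antisymm ht.2 ht.1
  have hderiv : deriv f =ᶠ[𝓝 a] fun _ => 0 := by
    filter_upwards [hconst.eventuallyEq_nhds] with t ht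
    rw [ht.deriv_eq, deriv_const]
  rw [hderiv.deriv_eq, deriv_const] at hpos
  exact hpos.false

theorem le_of_isLocalMax_sub {f g f' g' : ℝ → ℝ} {f'' g'' a : ℝ}
    (hf : ∀ᶠ t in 𝓝 a, HasDerivAt f (f' t) t) (hg : ∀ᶠ t in 𝓝 a, HasDerivAt g (g' t) t)
    (hf' : HasDerivAt f' f'' a) (hg' : HasDerivAt g' g'' a)
    (hmax : IsLocalMax (fun t => f t - g t) a) : f'' ≤ g'' := by
  have hderiv : deriv (fun t => f t - g t) =ᶠ[𝓝 a] fun t => f' t - g' t := by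
    filter_upwards [hf, hg] with t hft hgt using (hft.sub hgt).deriv
  have h := hmax.deriv_deriv_nonpos
    (hf.self_of_nhds.continuousAt.sub hg.self_of_nhds.continuousAt)
  rw [hderiv.deriv_eq, (hf'.fun_sub hg').deriv] at h
  linarith

section Line

variable {E F : Type*} [NormedAddCommGroup E] [NormedSpace ℝ E]
  [NormedAddCommGroup F] [NormedSpace ℝ F]

theorem hasDerivAt_comp_add_smul {f : E → F} {x v : E} {t : ℝ}
    (hf : DifferentiableAt ℝ f (x + t • v)) :
    HasDerivAt (fun s : ℝ => f (x + s • v)) (fderiv ℝ f (x + t • v) v) t :=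
  hf.hasFDerivAt.comp_hasDerivAt t (((hasDerivAt_id t).smul_const v).const_add x |>.congr_deriv
    (one_smul ℝ v))

theorem hasDerivAt_fderiv_comp_add_smul {f : E → F} (hf : ContDiff ℝ 2 f) (x v : E) :
    HasDerivAt (fun s : ℝ => fderiv ℝ f (x + s • v) v) (iteratedFDeriv ℝ 2 f x ![v, v]) 0 := by
  have hdiff : DifferentiableAt ℝ (fderiv ℝ f) (x + (0 : ℝ) • v) :=
    ((hf.fderiv_right (m := 1) le_rfl).differentiable one_ne_zero).differentiableAt
  rw [iteratedFDeriv_two_apply]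
  simpa using (hasDerivAt_comp_add_smul hdiff).clm_apply (hasDerivAt_const (0 : ℝ) v)

end Line

section Radial

variable {E : Type*} [NormedAddCommGroup E] [InnerProductSpace ℝ E]

theorem hasDerivAt_comp_norm_sq_add_smul {g : ℝ → ℝ} {g' : ℝ} {x v : E} {t : ℝ}
    (hg : HasDerivAt g g' (‖x + t • v‖ ^ 2)) :
    HasDerivAt (fun s : ℝ => g (‖x + s • v‖ ^ 2)) (g' * (2 * ⟪x + t • v, v⟫)) t := by
  have hline : HasDerivAt (fun s : ℝ => x + s • v) v t :=
    ((hasDerivAt_id t).smul_const v).const_add x |>.congr_deriv (one_smul ℝ v)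
  exact hg.comp t hline.norm_sq

theorem hasDerivAt_deriv_comp_norm_sq_add_smul {g' : ℝ → ℝ} {g'' : ℝ} {x v : E}
    (hg' : HasDerivAt g' g'' (‖x‖ ^ 2)) :
    HasDerivAt (fun s : ℝ => g' (‖x + s • v‖ ^ 2) * (2 * ⟪x + s • v, v⟫))
      (g'' * (2 * ⟪x, v⟫) ^ 2 + g' (‖x‖ ^ 2) * (2 * ‖v‖ ^ 2)) 0 := by
  have hline : HasDerivAt (fun s : ℝ => x + s • v) v 0 :=
    ((hasDerivAt_id (0 : ℝ)).smul_const v).const_add x |>.congr_deriv (one_smul ℝ v)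
  have h1 := hasDerivAt_comp_norm_sq_add_smul (v := v) (t := 0) (by simpa using hg')
  have h2 := (hline.inner ℝ (hasDerivAt_const (0 : ℝ) v)).const_mul 2
  refine (h1.fun_mul h2).congr_deriv ?_
  simp only [zero_smul, add_zero, inner_zero_right, zero_add, real_inner_self_eq_norm_sq]
  ring

theorem iteratedFDeriv_two_le_of_isLocalMax_sub_comp_norm_sq {φ : E → ℝ} (hφ : ContDiff ℝ 2 φ)
    {g g' : ℝ → ℝ} {g'' : ℝ} {x : E} (hg : ∀ᶠ s in 𝓝 (‖x‖ ^ 2), HasDerivAt g (g' s) s)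
    (hg' : HasDerivAt g' g'' (‖x‖ ^ 2)) (hmax : IsLocalMax (fun y => φ y - g (‖y‖ ^ 2)) x)
    (v : E) :
    iteratedFDeriv ℝ 2 φ x ![v, v] ≤ g'' * (2 * ⟪x, v⟫) ^ 2 + g' (‖x‖ ^ 2) * (2 * ‖v‖ ^ 2) := by
  have hline : Continuous fun s : ℝ => x + s • v := by fun_prop
  have hg_line : ∀ᶠ s : ℝ in 𝓝 0, HasDerivAt g (g' (‖x + s • v‖ ^ 2)) (‖x + s • v‖ ^ 2) :=
    ((hline.norm.pow 2).tendsto' 0 _ (by simp)).eventually hg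
  refine le_of_isLocalMax_sub
    (.of_forall fun t => hasDerivAt_comp_add_smul (hφ.differentiable two_ne_zero _))
    (hg_line.mono fun t ht => hasDerivAt_comp_norm_sq_add_smul ht)
    (hasDerivAt_fderiv_comp_add_smul hφ x v) (hasDerivAt_deriv_comp_norm_sq_add_smul hg') ?_
  have hmax' : IsLocalMax (fun y => φ y - g (‖y‖ ^ 2)) (x + (0 : ℝ) • v) := by simpa using hmax
  exact hmax'.comp_continuous (g := fun s : ℝ => x + s • v) hline.continuousAt

end Radial

theorem laplacian_le_of_isLocalMax_sub_comp_norm_sq {n : ℕ} {φ : EuclideanSpace ℝ (Fin n) → ℝ}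
    (hφ : ContDiff ℝ 2 φ) {g g' : ℝ → ℝ} {g'' : ℝ} {x : EuclideanSpace ℝ (Fin n)}
    (hg : ∀ᶠ s in 𝓝 (‖x‖ ^ 2), HasDerivAt g (g' s) s) (hg' : HasDerivAt g' g'' (‖x‖ ^ 2))
    (hmax : IsLocalMax (fun y => φ y - g (‖y‖ ^ 2)) x) :
    laplacian φ x ≤ 4 * ‖x‖ ^ 2 * g'' + 2 * n * g' (‖x‖ ^ 2) := by
  calc laplacian φ x
      ≤ ∑ i, (g'' * (2 * x i) ^ 2 + g' (‖x‖ ^ 2) * 2) := by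
        refine Finset.sum_le_sum fun i _ => ?_
        simpa [EuclideanSpace.inner_single_right] using
          iteratedFDeriv_two_le_of_isLocalMax_sub_comp_norm_sq hφ hg hg' hmax
            (EuclideanSpace.single i 1)
    _ = 4 * ‖x‖ ^ 2 * g'' + 2 * n * g' (‖x‖ ^ 2) := by
        have hsum : ∑ i, (2 * x i) ^ 2 = 4 * ‖x‖ ^ 2 := by
          simp only [mul_pow, ← Finset.mul_sum, EuclideanSpace.real_norm_sq_eq]
          norm_num
        rw [Finset.sum_add_distrib, ← Finset.mul_sum, hsum, Finset.sum_const, Finset.card_univ,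
          Fintype.card_fin, nsmul_eq_mul]
        ring

theorem exists_isLocalMax_mem_ball {E : Type*} [PseudoMetricSpace E] [ProperSpace E] {F : E → ℝ}
    {c x₀ : E} {r : ℝ} (hF : ContinuousOn F (closedBall c r)) (hx₀ : x₀ ∈ closedBall c r)
    (hsphere : ∀ y ∈ sphere c r, F y < F x₀) :
    ∃ p ∈ ball c r, IsLocalMax F p ∧ F x₀ ≤ F p := by
  obtain ⟨p, hp, hpmax⟩ := (isCompact_closedBall c r).exists_isMaxOn ⟨x₀, hx₀⟩ hF
  have hp_ball : p ∈ ball c r := by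
    rcases (mem_closedBall.1 hp).lt_or_eq with h | h
    · exact h
    · exact absurd (hpmax hx₀) (hsphere p h).not_ge
  exact ⟨p, hp_ball, hpmax.isLocalMax (mem_of_superset (isOpen_ball.mem_nhds hp_ball)
    ball_subset_closedBall), hpmax hx₀⟩

theorem hasDerivAt_div_sub_pow (a r : ℝ) (k : ℕ) {s : ℝ} (hs : s ≠ r) :
    HasDerivAt (fun s => a / (r - s) ^ (k + 1)) ((k + 1) * a / (r - s) ^ (k + 2)) s := by
  have hne : r - s ≠ 0 := sub_ne_zero.2 hs.symm
  have hpow : HasDerivAt (fun s => (r - s) ^ (k + 1)) ((k + 1) * (r - s) ^ k * (-1)) s := by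
    simpa using ((hasDerivAt_id s).const_sub r).fun_pow (k + 1)
  refine ((hasDerivAt_const s a).div hpow (pow_ne_zero _ hne)).congr_deriv ?_
  field_simp
  ring

-- A function of `s = ‖x‖²`; the amplitude `(2n + 12) r` is what makes the Laplacian of
-- `x ↦ ossermanBarrier n r (‖x‖²)` at most twice its square (`laplacian_ossermanBarrier_le`).
noncomputable def ossermanBarrier (n : ℕ) (r : ℝ) : ℝ → ℝ :=
  fun s => (2 * n + 12) * r / (r - s) ^ 2

theorem hasDerivAt_ossermanBarrier (n : ℕ) {r s : ℝ} (hs : s ≠ r) :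
    HasDerivAt (ossermanBarrier n r) (2 * ((2 * n + 12) * r) / (r - s) ^ 3) s := by
  have h := hasDerivAt_div_sub_pow ((2 * n + 12) * r) r 1 hs
  norm_num at h
  exact h

theorem tendsto_ossermanBarrier (n : ℕ) {r : ℝ} (hr : 0 < r) :
    Tendsto (ossermanBarrier n r) (𝓝[<] r) atTop := by
  have hsq : Tendsto (fun s => (r - s) ^ 2) (𝓝[<] r) (𝓝[>] 0) := by
    refine tendsto_nhdsWithin_iff.2 ⟨?_, eventually_nhdsWithin_of_forall fun s hs => ?_⟩
    · exact tendsto_nhdsWithin_of_tendsto_nhds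
        ((by fun_prop : Continuous fun s : ℝ => (r - s) ^ 2).tendsto' r 0 (by simp))
    · exact mem_Ioi.2 (pow_pos (sub_pos.2 (mem_Iio.1 hs)) 2)
  exact hsq.inv_tendsto_nhdsGT_zero.const_mul_atTop (by positivity)

theorem laplacian_ossermanBarrier_le (n : ℕ) {r s : ℝ} (hs : 0 ≤ s) (hsr : s < r) :
    4 * s * (3 * (2 * ((2 * n + 12) * r)) / (r - s) ^ 4)
      + 2 * n * (2 * ((2 * n + 12) * r) / (r - s) ^ 3) ≤ 2 * ossermanBarrier n r s ^ 2 := by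
  have hu : 0 < r - s := sub_pos.2 hsr
  have hr : 0 < r := hs.trans_lt hsr
  have hkey : 24 * s + 4 * n * (r - s) ≤ 2 * ((2 * n + 12) * r) := by nlinarith
  calc _ = (2 * n + 12) * r * (24 * s + 4 * n * (r - s)) / (r - s) ^ 4 := by
        field_simp
        ring
    _ ≤ (2 * n + 12) * r * (2 * ((2 * n + 12) * r)) / (r - s) ^ 4 := by gcongr
    _ = 2 * ossermanBarrier n r s ^ 2 := by
        simp only [ossermanBarrier]
        field_simp

theorem le_ossermanBarrier {n : ℕ} {φ : EuclideanSpace ℝ (Fin n) → ℝ} (hφ : ContDiff ℝ 2 φ)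
    (hineq : ∀ x, 2 * φ x ^ 2 ≤ laplacian φ x) {r : ℝ} {x : EuclideanSpace ℝ (Fin n)}
    (hx : ‖x‖ ^ 2 < r) : φ x ≤ ossermanBarrier n r (‖x‖ ^ 2) := by
  by_contra! hlt
  have hr : 0 < r := (sq_nonneg _).trans_lt hx
  obtain ⟨M, hM⟩ := (isCompact_closedBall (0 : EuclideanSpace ℝ (Fin n)) √r).bddAbove_image
    hφ.continuous.continuousOn
  obtain ⟨s, hMs, hxs, hsr⟩ : ∃ s, M ≤ ossermanBarrier n r s ∧ ‖x‖ ^ 2 < s ∧ s < r :=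
    (((tendsto_ossermanBarrier n hr).eventually_ge_atTop M).and (Ioo_mem_nhdsLT hx)).exists
  have hs : 0 ≤ s := (sq_nonneg _).trans hxs.le
  have hball : ∀ y ∈ closedBall (0 : EuclideanSpace ℝ (Fin n)) √s, ‖y‖ ^ 2 ≤ s := fun y hy =>
    (Real.le_sqrt (norm_nonneg y) hs).1 (mem_closedBall_zero_iff.1 hy)
  have hcont : ContinuousOn (fun y => φ y - ossermanBarrier n r (‖y‖ ^ 2)) (closedBall 0 √s) :=
    hφ.continuous.continuousOn.sub fun y hy =>
      ((hasDerivAt_ossermanBarrier n ((hball y hy).trans_lt hsr).ne).continuousAt.comp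
        (f := fun y : EuclideanSpace ℝ (Fin n) => ‖y‖ ^ 2) (by fun_prop)).continuousWithinAt
  have hsphere : ∀ y ∈ sphere (0 : EuclideanSpace ℝ (Fin n)) √s,
      φ y - ossermanBarrier n r (‖y‖ ^ 2) < φ x - ossermanBarrier n r (‖x‖ ^ 2) := by
    intro y hy
    have hy_sq : ‖y‖ ^ 2 = s := by rw [mem_sphere_zero_iff_norm.1 hy, Real.sq_sqrt hs]
    have hyM : φ y ≤ M := hM ⟨y, mem_closedBall_zero_iff.2
      ((mem_sphere_zero_iff_norm.1 hy).le.trans (Real.sqrt_le_sqrt hsr.le)), rfl⟩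
    rw [hy_sq]
    linarith
  obtain ⟨p, hp, hpmax, hxp⟩ := exists_isLocalMax_mem_ball hcont
    (mem_closedBall_zero_iff.2 (Real.le_sqrt_of_sq_le hxs.le)) hsphere
  have hpr : ‖p‖ ^ 2 < r := (hball p (ball_subset_closedBall hp)).trans_lt hsr
  have hlap := laplacian_le_of_isLocalMax_sub_comp_norm_sq hφ
    (g' := fun s => 2 * ((2 * n + 12) * r) / (r - s) ^ 3)
    ((eventually_lt_nhds hpr).mono fun s hs => hasDerivAt_ossermanBarrier n (ne_of_lt hs))
    (by simpa using hasDerivAt_div_sub_pow (2 * ((2 * n + 12) * r)) r 2 hpr.ne) hpmax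
  have hbarrier := laplacian_ossermanBarrier_le n (sq_nonneg ‖p‖) hpr
  have hpos : 0 < ossermanBarrier n r (‖p‖ ^ 2) := by
    have := sub_pos.2 hpr
    simp only [ossermanBarrier]
    positivity
  nlinarith [hineq p]

theorem nonpos_of_two_sq_le_laplacian {n : ℕ} {φ : EuclideanSpace ℝ (Fin n) → ℝ}
    (hφ : ContDiff ℝ 2 φ) (hineq : ∀ x, 2 * φ x ^ 2 ≤ laplacian φ x)
    (x : EuclideanSpace ℝ (Fin n)) : φ x ≤ 0 := by
  have hbound : ∀ᶠ r in atTop, φ x ≤ 4 * (2 * n + 12) / r := by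
    filter_upwards [eventually_ge_atTop (2 * ‖x‖ ^ 2 + 1)] with r hr
    have hx : ‖x‖ ^ 2 < r := by nlinarith [sq_nonneg ‖x‖]
    have hr : 0 < r := (sq_nonneg _).trans_lt hx
    calc φ x ≤ ossermanBarrier n r (‖x‖ ^ 2) := le_ossermanBarrier hφ hineq hx
      _ ≤ 4 * (2 * n + 12) / r := by
        have hsq : r ^ 2 ≤ 4 * (r - ‖x‖ ^ 2) ^ 2 := by nlinarith [sq_nonneg ‖x‖]
        rw [ossermanBarrier, div_le_div_iff₀ (pow_pos (sub_pos.2 hx) 2) hr]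
        nlinarith [mul_le_mul_of_nonneg_left hsq (by positivity : (0 : ℝ) ≤ 2 * n + 12)]
  exact ge_of_tendsto (tendsto_const_nhds.div_atTop tendsto_id) hbound

theorem exists_laplacian_lt_of_bddAbove {n : ℕ} {φ : EuclideanSpace ℝ (Fin n) → ℝ}
    (hφ : ContDiff ℝ 2 φ) (hbdd : BddAbove (range φ)) {δ : ℝ} (hδ : 0 < δ) :
    ∃ x, laplacian φ x < δ := by
  obtain ⟨S, hS⟩ := hbdd
  set c := δ / (2 * (n + 1))
  have hc : 0 < c := by positivity
  obtain ⟨R, hR0, hR⟩ : ∃ R : ℝ, 0 ≤ R ∧ S - φ 0 < c * R ^ 2 :=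
    ((eventually_ge_atTop 0).and (((tendsto_pow_atTop two_ne_zero).const_mul_atTop hc)
      |>.eventually_gt_atTop (S - φ 0))).exists
  have hsphere : ∀ y ∈ sphere (0 : EuclideanSpace ℝ (Fin n)) R,
      φ y - c * ‖y‖ ^ 2 < φ 0 - c * ‖(0 : EuclideanSpace ℝ (Fin n))‖ ^ 2 := by
    intro y hy
    rw [mem_sphere_zero_iff_norm.1 hy, norm_zero]
    linarith [hS (mem_range_self y)]
  have hcont : Continuous fun y => φ y - c * ‖y‖ ^ 2 := by
    have := hφ.continuous
    fun_prop
  obtain ⟨p, -, hpmax, -⟩ := exists_isLocalMax_mem_ball hcont.continuousOn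
    (mem_closedBall_self hR0) hsphere
  have hlap := laplacian_le_of_isLocalMax_sub_comp_norm_sq hφ (g := fun s => c * s)
    (.of_forall fun s => by simpa using (hasDerivAt_id s).const_mul c) (hasDerivAt_const _ _)
    hpmax
  refine ⟨p, hlap.trans_lt ?_⟩
  have : 2 * n * c < δ := by
    rw [mul_div_assoc', div_lt_iff₀ (by positivity)]
    nlinarith
  simpa using this

theorem stmt_9_general (n : ℕ) (φ : EuclideanSpace ℝ (Fin n) → ℝ)
    (hφ : ContDiff ℝ 2 φ)
    (hineq : ∀ x, 2 * (φ x) ^ 2 ≤ laplacian φ x) :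
    (∀ x, φ x ≤ 0) ∧ sSup (Set.range φ) = 0 ∧
      ((∀ x, 0 ≤ φ x) → ∀ x, φ x = 0) := by
  have hle : ∀ x, φ x ≤ 0 := nonpos_of_two_sq_le_laplacian hφ hineq
  refine ⟨hle, ?_, fun hge x => le_antisymm (hle x) (hge x)⟩
  have hbdd : BddAbove (range φ) := ⟨0, forall_mem_range.2 hle⟩
  refine le_antisymm (csSup_le (range_nonempty φ) (forall_mem_range.2 hle))
    (not_lt.1 fun hS => ?_)
  obtain ⟨x, hx⟩ := exists_laplacian_lt_of_bddAbove hφ hbdd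
    (by positivity [hS.ne] : 0 < 2 * sSup (range φ) ^ 2)
  have hxS : φ x ≤ sSup (range φ) := le_csSup hbdd (mem_range_self x)
  nlinarith [hineq x]

/-- If a `C²` function `φ` on Euclidean space satisfies `Δφ ≥ 2φ²`, then
`φ ≤ 0` everywhere, `sup φ = 0`, and if moreover `φ ≥ 0` then `φ ≡ 0`. -/
theorem stmt_9 (n : ℕ) (hn : 1 ≤ n) (φ : EuclideanSpace ℝ (Fin n) → ℝ)
    (hφ : ContDiff ℝ 2 φ)
    (hineq : ∀ x, 2 * (φ x) ^ 2 ≤ laplacian φ x) :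
    (∀ x, φ x ≤ 0) ∧ sSup (Set.range φ) = 0 ∧
      ((∀ x, 0 ≤ φ x) → ∀ x, φ x = 0) :=
  stmt_9_general n φ hφ hineq
end

section
/- Let U ⊆ ℂ be open, let α₀ : U → ℂ^(n−4) and φ₀ : U → ℂ^(n−4) be complex differentiable with φ₀' = α₀, and let β₁, β₂ : U → ℂ be complex differentiable and nowhere vanishing. Define α₁ : U → ℂ^(n−2) by α₁ = β₁(1 − φ₀ ⋅ φ₀, i(1 + φ₀ ⋅ φ₀), 2φ₀); let φ₁ : U → ℂ^(n−2) be complex differentiable with φ₁' = α₁; define α₂ : U → ℂ^n by α₂ = β₂(1 − φ₁ ⋅ φ₁, i(1 + φ₁ ⋅ φ₁), 2φ₁); and let G : U → ℂ^n be complex differentiable with G' = α₂. Set g : U → ℝ^n, g(z) = (Re G_1(z), …, Re G_n(z)). Then: (i) G'(z) ⋅ G'(z) = 0 and (ii) G''(z) ⋅ G''(z) = 0 for all z ∈ U; (iii) G'(z) ≠ 0 for all z ∈ U; and (iv) at every z ∈ U the partial derivatives ∂ₓg(z) (derivative of g in the real direction 1) and ∂ᵧg(z) (derivative of g in the direction i)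 are orthogonal in ℝ^n with equal nonzero Euclidean norms, and each component g_j is harmonic on U. -/
/-!
The map `N(φ) = (1 − φ ⋅ φ, i(1 + φ ⋅ φ), 2φ)` takes values in the null cone `{v ⋅ v = 0}` and
never vanishes, and its differential `DN(φ)h` satisfies `N(φ) ⋅ DN(φ)h = 0` and
`DN(φ)h ⋅ DN(φ)h = 4 h ⋅ h`. Hence `G' = β₂ N(φ₁)` is null and nonzero, and
`G'' = β₂' N(φ₁) + β₂ DN(φ₁)α₁` has `G'' ⋅ G'' = 4β₂² α₁ ⋅ α₁ = 0` because `α₁ = β₁ N(φ₀)` is null.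
Since `G' = ∂ₓg − i ∂ᵧg`, we get `G' ⋅ G' = |∂ₓg|² − |∂ᵧg|² − 2i⟪∂ₓg, ∂ᵧg⟫`, so isotropy of `G'`
is conformality of `g`; each `gⱼ` is harmonic as the real part of a holomorphic function.
-/

open Complex

/-- The Laplacian of a real-valued function on `ℂ ≅ ℝ²`: the trace of its
second derivative with respect to the orthonormal basis `{1, i}`. -/
noncomputable def laplacianC (f : ℂ → ℝ) (z : ℂ) : ℝ :=
  iteratedFDeriv ℝ 2 f z ![1, 1] + iteratedFDeriv ℝ 2 f z ![Complex.I, Complex.I]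

open Matrix

theorem HasDerivAt.dotProduct {𝕜 : Type*} [NontriviallyNormedField 𝕜] {x : 𝕜}
    {ι : Type*} [Fintype ι] {f g : 𝕜 → ι → 𝕜} {f' g' : ι → 𝕜}
    (hf : HasDerivAt f f' x) (hg : HasDerivAt g g' x) :
    HasDerivAt (fun y => f y ⬝ᵥ g y) (f' ⬝ᵥ g x + f x ⬝ᵥ g') x := by
  have := HasDerivAt.fun_sum (u := Finset.univ)
    fun j _ => (hasDerivAt_pi.1 hf j).fun_mul (hasDerivAt_pi.1 hg j)
  rw [Finset.sum_add_distrib] at this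
  exact this

section NullLift

variable {m : ℕ}

noncomputable def nullLift (f : Fin m → ℂ) : Fin (m + 2) → ℂ :=
  vecCons (1 - f ⬝ᵥ f) (vecCons (I * (1 + f ⬝ᵥ f)) ((2 : ℂ) • f))

noncomputable def nullLiftDeriv (f h : Fin m → ℂ) : Fin (m + 2) → ℂ :=
  vecCons (-(2 * f ⬝ᵥ h)) (vecCons (I * (2 * f ⬝ᵥ h)) ((2 : ℂ) • h))

theorem nullLift_dotProduct_self (f : Fin m → ℂ) : nullLift f ⬝ᵥ nullLift f = 0 := by
  simp only [nullLift, cons_dotProduct_cons, smul_dotProduct, dotProduct_smul, smul_eq_mul]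
  linear_combination (1 + f ⬝ᵥ f) ^ 2 * I_sq

theorem nullLift_dotProduct_nullLiftDeriv (f h : Fin m → ℂ) :
    nullLift f ⬝ᵥ nullLiftDeriv f h = 0 := by
  simp only [nullLift, nullLiftDeriv, cons_dotProduct_cons, smul_dotProduct, dotProduct_smul,
    smul_eq_mul]
  linear_combination (1 + f ⬝ᵥ f) * (2 * f ⬝ᵥ h) * I_sq

theorem nullLiftDeriv_dotProduct_self (f h : Fin m → ℂ) :
    nullLiftDeriv f h ⬝ᵥ nullLiftDeriv f h = 4 * h ⬝ᵥ h := by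
  simp only [nullLiftDeriv, cons_dotProduct_cons, smul_dotProduct, dotProduct_smul, smul_eq_mul]
  linear_combination (2 * f ⬝ᵥ h) ^ 2 * I_sq

theorem nullLift_ne_zero (f : Fin m → ℂ) : nullLift f ≠ 0 := by
  intro h
  have h0 : 1 - f ⬝ᵥ f = 0 := congrFun h 0
  have h1 : I * (1 + f ⬝ᵥ f) = 0 := congrFun h 1
  have : (2 : ℂ) = 0 := by linear_combination h0 - I * h1 + (1 + f ⬝ᵥ f) * I_sq
  norm_num at this

theorem HasDerivAt.nullLift {φ : ℂ → Fin m → ℂ} {φ' : Fin m → ℂ} {z : ℂ}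
    (hφ : HasDerivAt φ φ' z) :
    HasDerivAt (fun w => nullLift (φ w)) (nullLiftDeriv (φ z) φ') z := by
  have hs : HasDerivAt (fun w => φ w ⬝ᵥ φ w) (2 * φ z ⬝ᵥ φ') z := by
    have := hφ.dotProduct hφ
    rwa [dotProduct_comm φ', ← two_mul] at this
  exact HasDerivAt.finCons (F' := fun _ => ℂ) (hs.const_sub 1) <|
    HasDerivAt.finCons (F' := fun _ => ℂ) ((hs.const_add 1).const_mul I) (hφ.const_smul (2 : ℂ))

theorem cons_eq_smul_nullLift (b : ℂ) (f : Fin m → ℂ) :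
    (Fin.cons (b * (1 - ∑ j, f j * f j))
      (Fin.cons (I * (b * (1 + ∑ j, f j * f j))) (fun j => 2 * b * f j)) : Fin (m + 2) → ℂ) =
      b • nullLift f := by
  ext i
  refine Fin.cases ?_ (fun i => Fin.cases ?_ (fun j => ?_) i) i
  all_goals simp [nullLift, dotProduct]
  all_goals ring

theorem smul_nullLift_dotProduct_self (b : ℂ) (f : Fin m → ℂ) :
    (b • nullLift f) ⬝ᵥ (b • nullLift f) = 0 := by
  rw [smul_dotProduct, dotProduct_smul, nullLift_dotProduct_self, smul_zero, smul_zero]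

theorem dotProduct_self_smul_nullLiftDeriv_add_smul_nullLift (b b' : ℂ) (f h : Fin m → ℂ) :
    (b • nullLiftDeriv f h + b' • nullLift f) ⬝ᵥ (b • nullLiftDeriv f h + b' • nullLift f) =
      4 * b ^ 2 * h ⬝ᵥ h := by
  simp only [add_dotProduct, dotProduct_add, smul_dotProduct, dotProduct_smul, smul_eq_mul,
    nullLiftDeriv_dotProduct_self, nullLift_dotProduct_nullLiftDeriv, nullLift_dotProduct_self,
    dotProduct_comm (nullLiftDeriv f h) (nullLift f)]
  ring

end NullLift

section RealPart

variable {ι : Type*} {v : ι → ℂ} {x y : EuclideanSpace ℝ ι}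

theorem eq_zero_of_re_im_eq_zero (hx : ∀ j, x j = (v j).re)
    (hy : ∀ j, y j = -(v j).im) (hx0 : x = 0) (hy0 : y = 0) : v = 0 := by
  funext j
  apply Complex.ext
  · simpa [hx0] using (hx j).symm
  · simpa [hy0] using (hy j).symm

variable [Fintype ι]

theorem two_mul_inner_eq_neg_im_dotProduct_self (hx : ∀ j, x j = (v j).re)
    (hy : ∀ j, y j = -(v j).im) : 2 * inner ℝ x y = -(v ⬝ᵥ v).im := by
  simp only [PiLp.inner_apply, hx, hy, dotProduct, Complex.im_sum, Complex.mul_im,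
    Finset.mul_sum, ← Finset.sum_neg_distrib]
  refine Finset.sum_congr rfl fun j _ => ?_
  rw [Real.inner_apply]
  ring

theorem norm_sq_sub_norm_sq_eq_re_dotProduct_self (hx : ∀ j, x j = (v j).re)
    (hy : ∀ j, y j = -(v j).im) : ‖x‖ ^ 2 - ‖y‖ ^ 2 = (v ⬝ᵥ v).re := by
  simp only [EuclideanSpace.real_norm_sq_eq, hx, hy, dotProduct, Complex.re_sum, Complex.mul_re,
    ← Finset.sum_sub_distrib]
  refine Finset.sum_congr rfl fun j _ => ?_
  ring

variable {G : ℂ → ι → ℂ} {g : ℂ → EuclideanSpace ℝ ι} {z : ℂ}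

theorem HasDerivAt.fderiv_re_apply (hg : ∀ w j, g w j = (G w j).re) (hG : HasDerivAt G v z)
    (c : ℂ) (j : ι) : fderiv ℝ g z c j = (c * v j).re := by
  let T : (ι → ℂ) →L[ℝ] EuclideanSpace ℝ ι :=
    (EuclideanSpace.equiv ι ℝ).symm.toContinuousLinearMap ∘L
      ContinuousLinearMap.pi fun j => reCLM ∘L ContinuousLinearMap.proj j
  have hgT : g = T ∘ G := by
    funext w; ext j; exact hg w j
  have := T.hasFDerivAt.comp z (hG.hasFDerivAt.restrictScalars ℝ)
  rw [hgT, this.fderiv]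
  simp [T]

theorem fderiv_re_conformal_of_isotropic (hg : ∀ w j, g w j = (G w j).re)
    (hG : HasDerivAt G v z) (hv : v ⬝ᵥ v = 0) (hv0 : v ≠ 0) :
    inner ℝ (fderiv ℝ g z 1) (fderiv ℝ g z I) = 0 ∧
      ‖fderiv ℝ g z 1‖ = ‖fderiv ℝ g z I‖ ∧ fderiv ℝ g z 1 ≠ 0 := by
  have hx : ∀ j, fderiv ℝ g z 1 j = (v j).re := fun j => by
    simpa using hG.fderiv_re_apply hg 1 j
  have hy : ∀ j, fderiv ℝ g z I j = -(v j).im := fun j => by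
    simpa using hG.fderiv_re_apply hg I j
  have hinner := two_mul_inner_eq_neg_im_dotProduct_self hx hy
  have hnorm := norm_sq_sub_norm_sq_eq_re_dotProduct_self hx hy
  rw [hv, Complex.zero_im, neg_zero] at hinner
  rw [hv, Complex.zero_re, sub_eq_zero] at hnorm
  have hnorm' : ‖fderiv ℝ g z 1‖ = ‖fderiv ℝ g z I‖ :=
    (sq_eq_sq₀ (norm_nonneg _) (norm_nonneg _)).1 hnorm
  refine ⟨by linarith, hnorm', fun hx0 => hv0 ?_⟩
  exact eq_zero_of_re_im_eq_zero hx hy hx0 (norm_eq_zero.1 (hnorm' ▸ norm_eq_zero.2 hx0))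

end RealPart

theorem AnalyticAt.laplacianC_re_eq_zero {F : ℂ → ℂ} {z : ℂ} (hF : AnalyticAt ℂ F z) :
    laplacianC (fun w => (F w).re) z = 0 := by
  rw [laplacianC, ← congrFun (InnerProductSpace.laplacian_eq_iteratedFDeriv_complexPlane _) z]
  exact hF.harmonicAt_re.2.self_of_nhds

theorem stmt_14_general (k : ℕ) (U : Set ℂ) (hU : IsOpen U)
    (φ₀ : ℂ → Fin k → ℂ)
    (β₁ β₂ : ℂ → ℂ)
    (hβ₂ : DifferentiableOn ℂ β₂ U)
    (hβ₂0 : ∀ z ∈ U, β₂ z ≠ 0)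
    (α₁ : ℂ → Fin (k + 2) → ℂ)
    (hα₁ : ∀ z, α₁ z = Fin.cons (β₁ z * (1 - ∑ j, φ₀ z j * φ₀ z j))
        (Fin.cons (I * (β₁ z * (1 + ∑ j, φ₀ z j * φ₀ z j)))
          (fun j => 2 * β₁ z * φ₀ z j)))
    (φ₁ : ℂ → Fin (k + 2) → ℂ)
    (hφ₁ : ∀ z ∈ U, HasDerivAt φ₁ (α₁ z) z)
    (α₂ : ℂ → Fin (k + 4) → ℂ)
    (hα₂ : ∀ z, α₂ z = Fin.cons (β₂ z * (1 - ∑ j, φ₁ z j * φ₁ z j))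
        (Fin.cons (I * (β₂ z * (1 + ∑ j, φ₁ z j * φ₁ z j)))
          (fun j => 2 * β₂ z * φ₁ z j)))
    (G : ℂ → Fin (k + 4) → ℂ)
    (hG : ∀ z ∈ U, HasDerivAt G (α₂ z) z)
    (g : ℂ → EuclideanSpace ℝ (Fin (k + 4)))
    (hg : ∀ z j, g z j = (G z j).re) :
    ∀ z ∈ U,
      (∑ j, deriv G z j * deriv G z j) = 0 ∧
      (∑ j, deriv (deriv G) z j * deriv (deriv G) z j) = 0 ∧
      deriv G z ≠ 0 ∧
      ((inner ℝ (fderiv ℝ g z 1) (fderiv ℝ g z Complex.I) : ℝ) = 0 ∧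
        ‖fderiv ℝ g z 1‖ = ‖fderiv ℝ g z Complex.I‖ ∧
        fderiv ℝ g z 1 ≠ 0 ∧
        ∀ j, laplacianC (fun w => g w j) z = 0) := by
  intro z hz
  have hzU : U ∈ nhds z := hU.mem_nhds hz
  have hα₁' : ∀ w, α₁ w = β₁ w • nullLift (φ₀ w) :=
    fun w => (hα₁ w).trans (cons_eq_smul_nullLift _ _)
  have hα₂' : ∀ w, α₂ w = β₂ w • nullLift (φ₁ w) :=
    fun w => (hα₂ w).trans (cons_eq_smul_nullLift _ _)
  have hG' : deriv G z = β₂ z • nullLift (φ₁ z) := (hG z hz).deriv.trans (hα₂' z)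
  have hG'' : deriv (deriv G) z =
      β₂ z • nullLiftDeriv (φ₁ z) (α₁ z) + deriv β₂ z • nullLift (φ₁ z) := by
    have hderiv : deriv G =ᶠ[nhds z] fun w => β₂ w • nullLift (φ₁ w) := by
      filter_upwards [hzU] with w hw using (hG w hw).deriv.trans (hα₂' w)
    rw [hderiv.deriv_eq]
    exact (((hβ₂ z hz).differentiableAt hzU).hasDerivAt.smul
      (hφ₁ z hz).nullLift).deriv
  have hG'0 : deriv G z ≠ 0 := hG' ▸ smul_ne_zero (hβ₂0 z hz) (nullLift_ne_zero _)
  have hiso : deriv G z ⬝ᵥ deriv G z = 0 := hG' ▸ smul_nullLift_dotProduct_self _ _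
  obtain ⟨hinner, hnorm, hx0⟩ :=
    fderiv_re_conformal_of_isotropic hg (hG z hz).differentiableAt.hasDerivAt hiso hG'0
  refine ⟨hiso, ?_, hG'0, hinner, hnorm, hx0, fun j => ?_⟩
  · change deriv (deriv G) z ⬝ᵥ deriv (deriv G) z = 0
    rw [hG'', dotProduct_self_smul_nullLiftDeriv_add_smul_nullLift, hα₁',
      smul_nullLift_dotProduct_self, mul_zero]
  · have hGj : DifferentiableOn ℂ (fun w => G w j) U := fun w hw =>
      (hasDerivAt_pi.1 (hG w hw) j).differentiableAt.differentiableWithinAt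
    simpa only [hg] using (hGj.analyticAt hzU).laplacianC_re_eq_zero

/-- The Weierstrass-type representation for `1`-isotropic surfaces in
`ℝⁿ` with `n = k + 4`: starting from a holomorphic `α₀ : U → ℂᵏ` with
primitive `φ₀`, nowhere vanishing holomorphic functions `β₁, β₂`, the maps
`α₁ = β₁(1 − φ₀ ⋅ φ₀, i(1 + φ₀ ⋅ φ₀), 2φ₀)` with primitive `φ₁`, and
`α₂ = β₂(1 − φ₁ ⋅ φ₁, i(1 + φ₁ ⋅ φ₁), 2φ₁)` with primitive `G`, the surface
`g = Re G` satisfies: `G' ⋅ G' = 0`, `G'' ⋅ G'' = 0`, `G' ≠ 0`, and `g` is a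
conformal harmonic (minimal) immersion (dot products are complex-bilinear). -/
theorem stmt_14 (k : ℕ) (U : Set ℂ) (hU : IsOpen U)
    (α₀ φ₀ : ℂ → Fin k → ℂ)
    (hα₀ : DifferentiableOn ℂ α₀ U)
    (hφ₀ : ∀ z ∈ U, HasDerivAt φ₀ (α₀ z) z)
    (β₁ β₂ : ℂ → ℂ)
    (hβ₁ : DifferentiableOn ℂ β₁ U) (hβ₂ : DifferentiableOn ℂ β₂ U)
    (hβ₁0 : ∀ z ∈ U, β₁ z ≠ 0) (hβ₂0 : ∀ z ∈ U, β₂ z ≠ 0)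
    (α₁ : ℂ → Fin (k + 2) → ℂ)
    (hα₁ : ∀ z, α₁ z = Fin.cons (β₁ z * (1 - ∑ j, φ₀ z j * φ₀ z j))
        (Fin.cons (I * (β₁ z * (1 + ∑ j, φ₀ z j * φ₀ z j)))
          (fun j => 2 * β₁ z * φ₀ z j)))
    (φ₁ : ℂ → Fin (k + 2) → ℂ)
    (hφ₁ : ∀ z ∈ U, HasDerivAt φ₁ (α₁ z) z)
    (α₂ : ℂ → Fin (k + 4) → ℂ)
    (hα₂ : ∀ z, α₂ z = Fin.cons (β₂ z * (1 - ∑ j, φ₁ z j * φ₁ z j))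
        (Fin.cons (I * (β₂ z * (1 + ∑ j, φ₁ z j * φ₁ z j)))
          (fun j => 2 * β₂ z * φ₁ z j)))
    (G : ℂ → Fin (k + 4) → ℂ)
    (hG : ∀ z ∈ U, HasDerivAt G (α₂ z) z)
    (g : ℂ → EuclideanSpace ℝ (Fin (k + 4)))
    (hg : ∀ z j, g z j = (G z j).re) :
    ∀ z ∈ U,
      (∑ j, deriv G z j * deriv G z j) = 0 ∧
      (∑ j, deriv (deriv G) z j * deriv (deriv G) z j) = 0 ∧
      deriv G z ≠ 0 ∧
      ((inner ℝ (fderiv ℝ g z 1) (fderiv ℝ g z Complex.I) : ℝ) = 0 ∧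
        ‖fderiv ℝ g z 1‖ = ‖fderiv ℝ g z Complex.I‖ ∧
        fderiv ℝ g z 1 ≠ 0 ∧
        ∀ j, laplacianC (fun w => g w j) z = 0) :=
  stmt_14_general k U hU φ₀ β₁ β₂ hβ₂ hβ₂0 α₁ hα₁ φ₁ hφ₁ α₂ hα₂ G hG g hg
end
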